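/- Let X ∈ ℝ^{n×n} be a nonzero symmetric positive semidefinite matrix and let Z ∈ ℝ^{n×n} be a nonzero symmetric matrix whose range is contained in the range of X. Then there exists t* > 0 such that both X + t*Z and X − t*Z are positive semidefinite. -/

import Mathlib

/-!
Since `range Z ⊆ range X` and both matrices are symmetric, `ker X ⊆ ker Z`. Splitting
`ℝⁿ = ker X ⊕ C`, both quadratic forms `x ↦ xᵀ X x` and `x ↦ xᵀ Z x` only see the `C`-component,
and on `C` the form of `X` is positive definite. By compactness of the unit sphere of `C` there is
`t > 0` with `t |xᵀ Z x| ≤ xᵀ X x` for all `x`, which is exactly `X ± t Z ⪰ 0`.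
-/

open Matrix

theorem exists_pos_mul_abs_le_of_homogeneous {V : Type*} [NormedAddCommGroup V] [NormedSpace ℝ V]
    [FiniteDimensional ℝ V] {f g : V → ℝ} (hfc : Continuous f) (hgc : Continuous g)
    (hfs : ∀ (c : ℝ) v, f (c • v) = c ^ 2 * f v) (hgs : ∀ (c : ℝ) v, g (c • v) = c ^ 2 * g v)
    (hpos : ∀ v, v ≠ 0 → 0 < f v) :
    ∃ t : ℝ, 0 < t ∧ ∀ v, t * |g v| ≤ f v := by
  have hsphere : ∀ u ∈ Metric.sphere (0 : V) 1, 0 < f u := fun u hu =>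
    hpos u (ne_zero_of_mem_unit_sphere ⟨u, hu⟩)
  obtain ⟨M, hM⟩ := (isCompact_sphere (0 : V) 1).bddAbove_image
    (hgc.abs.continuousOn.div hfc.continuousOn fun u hu => (hsphere u hu).ne')
  refine ⟨(max M 1)⁻¹, by positivity, fun v => ?_⟩
  rw [inv_mul_le_iff₀ (by positivity)]
  obtain rfl | hv := eq_or_ne v 0
  · have hf0 : f 0 = 0 := by simpa using hfs 0 0
    have hg0 : g 0 = 0 := by simpa using hgs 0 0
    simp [hf0, hg0]
  set u := ‖v‖⁻¹ • v
  have hu : u ∈ Metric.sphere (0 : V) 1 := by simp [u, norm_smul, hv]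
  have hvu : v = ‖v‖ • u := by simp [u, smul_smul, hv]
  have hbound : |g u| ≤ max M 1 * f u := by
    rw [← div_le_iff₀ (hsphere u hu)]
    exact (hM ⟨u, hu, rfl⟩).trans (le_max_left _ _)
  rw [hvu, hfs, hgs, abs_mul, abs_of_nonneg (by positivity)]
  nlinarith [sq_nonneg ‖v‖]

namespace Matrix

theorem PosSemidef.isSymm {n : Type*} {X : Matrix n n ℝ} (hX : X.PosSemidef) : X.IsSymm :=
  isHermitian_iff_isSymm.mp hX.isHermitian

variable {n : Type*} [Fintype n]

theorem smul_dotProduct_mulVec_smul {R : Type*} [CommSemiring R] (A : Matrix n n R) (c : R)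
    (x : n → R) : c • x ⬝ᵥ A *ᵥ (c • x) = c ^ 2 * (x ⬝ᵥ A *ᵥ x) := by
  simp only [mulVec_smul, dotProduct_smul, smul_dotProduct, smul_eq_mul]
  ring

theorem IsSymm.dotProduct_mulVec_comm {R : Type*} [CommSemiring R] {A : Matrix n n R}
    (hA : A.IsSymm) (x y : n → R) : x ⬝ᵥ A *ᵥ y = A *ᵥ x ⬝ᵥ y := by
  rw [dotProduct_mulVec, ← mulVec_transpose, hA.eq]

theorem IsSymm.dotProduct_mulVec_add_of_mulVec_eq_zero {R : Type*} [CommSemiring R]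
    {A : Matrix n n R} (hA : A.IsSymm) {q : n → R} (hq : A *ᵥ q = 0) (p : n → R) :
    (p + q) ⬝ᵥ A *ᵥ (p + q) = p ⬝ᵥ A *ᵥ p := by
  rw [mulVec_add, hq, add_zero, add_dotProduct, hA.dotProduct_mulVec_comm q, hq, zero_dotProduct,
    add_zero]

theorem ker_mulVecLin_le_of_range_le {R : Type*} [CommRing R] [LinearOrder R]
    [IsStrictOrderedRing R] {X Z : Matrix n n R} (hX : X.IsSymm) (hZ : Z.IsSymm)
    (h : LinearMap.range Z.mulVecLin ≤ LinearMap.range X.mulVecLin) :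
    LinearMap.ker X.mulVecLin ≤ LinearMap.ker Z.mulVecLin := by
  intro q hq
  rw [LinearMap.mem_ker, mulVecLin_apply] at hq ⊢
  obtain ⟨w, hw⟩ := h ⟨Z *ᵥ q, rfl⟩
  replace hw : X *ᵥ w = Z *ᵥ Z *ᵥ q := hw
  apply dotProduct_self_eq_zero.mp
  rw [← hZ.dotProduct_mulVec_comm, ← hw, hX.dotProduct_mulVec_comm, hq, zero_dotProduct]

theorem PosSemidef.dotProduct_mulVec_pos_of_disjoint {X : Matrix n n ℝ} (hX : X.PosSemidef)
    {C : Submodule ℝ (n → ℝ)} (hC : Disjoint (LinearMap.ker X.mulVecLin) C) {p : n → ℝ}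
    (hpC : p ∈ C) (hp : p ≠ 0) : 0 < p ⬝ᵥ X *ᵥ p := by
  refine (hX.dotProduct_mulVec_nonneg p).lt_of_ne' fun h => hp ?_
  have hker : X *ᵥ p = 0 := (hX.dotProduct_mulVec_zero_iff p).mp (by simpa using h)
  exact Submodule.disjoint_def.mp hC p hker hpC

theorem PosSemidef.exists_mul_abs_dotProduct_mulVec_le {X Z : Matrix n n ℝ} (hX : X.PosSemidef)
    (hZ : Z.IsSymm) (hker : LinearMap.ker X.mulVecLin ≤ LinearMap.ker Z.mulVecLin) :
    ∃ t : ℝ, 0 < t ∧ ∀ x, t * |x ⬝ᵥ Z *ᵥ x| ≤ x ⬝ᵥ X *ᵥ x := by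
  obtain ⟨C, hC⟩ := (LinearMap.ker X.mulVecLin).exists_isCompl
  obtain ⟨t, ht, hbound⟩ := exists_pos_mul_abs_le_of_homogeneous (V := C)
    (f := fun p => (p : n → ℝ) ⬝ᵥ X *ᵥ p) (g := fun p => (p : n → ℝ) ⬝ᵥ Z *ᵥ p)
    (by fun_prop) (by fun_prop)
    (fun c p => smul_dotProduct_mulVec_smul X c p) (fun c p => smul_dotProduct_mulVec_smul Z c p)
    (fun p hp => hX.dotProduct_mulVec_pos_of_disjoint hC.disjoint p.2 (by simpa using hp))
  refine ⟨t, ht, fun x => ?_⟩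
  obtain ⟨q, hq, p, hp, rfl⟩ := Submodule.mem_sup.mp (hC.sup_eq_top ▸ Submodule.mem_top :
    x ∈ LinearMap.ker X.mulVecLin ⊔ C)
  rw [add_comm, hX.isSymm.dotProduct_mulVec_add_of_mulVec_eq_zero hq,
    hZ.dotProduct_mulVec_add_of_mulVec_eq_zero (hker hq)]
  exact hbound ⟨p, hp⟩

theorem PosSemidef.add_smul_of_mul_abs_le {X Z : Matrix n n ℝ} (hX : X.PosSemidef)
    (hZ : Z.IsSymm) {t s : ℝ} (hbound : ∀ x, t * |x ⬝ᵥ Z *ᵥ x| ≤ x ⬝ᵥ X *ᵥ x) (hs : |s| ≤ t) :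
    (X + s • Z).PosSemidef := by
  refine .of_dotProduct_mulVec_nonneg (hX.isHermitian.add ?_) fun x => ?_
  · exact isHermitian_iff_isSymm.mpr (hZ.smul s)
  · simp only [star_trivial, add_mulVec, smul_mulVec, dotProduct_add, dotProduct_smul, smul_eq_mul]
    have hs' : |s * (x ⬝ᵥ Z *ᵥ x)| ≤ t * |x ⬝ᵥ Z *ᵥ x| := by
      rw [abs_mul]
      exact mul_le_mul_of_nonneg_right hs (abs_nonneg _)
    linarith [neg_abs_le (s * (x ⬝ᵥ Z *ᵥ x)), hbound x]

end Matrix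

theorem two_sided_psd_perturbation_general
    (n : ℕ) (X Z : Matrix (Fin n) (Fin n) ℝ)
    (hX : X.PosSemidef) (hZsymm : Z.IsSymm)
    (hrange : LinearMap.range Z.mulVecLin ≤ LinearMap.range X.mulVecLin) :
    ∃ t : ℝ, 0 < t ∧ (X + t • Z).PosSemidef ∧ (X - t • Z).PosSemidef := by
  have hker := ker_mulVecLin_le_of_range_le hX.isSymm hZsymm hrange
  obtain ⟨t, ht, hbound⟩ := hX.exists_mul_abs_dotProduct_mulVec_le hZsymm hker
  refine ⟨t, ht, hX.add_smul_of_mul_abs_le hZsymm hbound (abs_of_pos ht).le, ?_⟩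
  rw [sub_eq_add_neg, ← neg_smul]
  exact hX.add_smul_of_mul_abs_le hZsymm hbound (by rw [abs_neg, abs_of_pos ht])

/-- Lemma A.3: if `X ⪰ 0` is nonzero and `Z` is a nonzero symmetric matrix
with `range Z ⊆ range X`, then there is `t* > 0` with both `X + t* Z ⪰ 0` and `X - t* Z ⪰ 0`. -/
theorem two_sided_psd_perturbation
    (n : ℕ) (X Z : Matrix (Fin n) (Fin n) ℝ)
    (hX : X.PosSemidef) (hXne : X ≠ 0) (hZsymm : Z.IsSymm) (hZne : Z ≠ 0)
    (hrange : LinearMap.range Z.mulVecLin ≤ LinearMap.range X.mulVecLin) :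
    ∃ t : ℝ, 0 < t ∧ (X + t • Z).PosSemidef ∧ (X - t • Z).PosSemidef :=
  two_sided_psd_perturbation_general n X Z hX hZsymm hrange
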